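/- Let e = {u,v} be a redundant edge of G and x a vertex of G not in the closed neighbourhood of {u,v}. Then either e is redundant in G_x, or α(G_x) ≤ α(G) − 2. -/

import Mathlib

open SimpleGraph

/-- The independence number of a graph. -/
noncomputable def indepNum' {V : Type} (G : SimpleGraph V) : ℕ :=
  sSup {n : ℕ | ∃ s : Set V, s.Finite ∧ s.ncard = n ∧ ∀ a ∈ s, ∀ b ∈ s, ¬ G.Adj a b}

/-- The number of edges of a graph. -/
noncomputable def numEdges {V : Type} (G : SimpleGraph V) : ℕ := G.edgeSet.ncard

/-- The degree (valency) of a vertex. -/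
noncomputable def deg {V : Type} (G : SimpleGraph V) (v : V) : ℕ := (G.neighborSet v).ncard

/-- The second valency `d²(v) = ∑_{w ∈ N(v)} d(w)`. -/
noncomputable def secondDeg {V : Type} (G : SimpleGraph V) (v : V) : ℕ :=
  ∑ᶠ w ∈ G.neighborSet v, deg G w

/-- `p = (a,b,c,d)` is an (ordered) 4-cycle of `G`. -/
def IsC4 {V : Type} (G : SimpleGraph V) (p : V × V × V × V) : Prop :=
  G.Adj p.1 p.2.1 ∧ G.Adj p.2.1 p.2.2.1 ∧ G.Adj p.2.2.1 p.2.2.2 ∧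
    G.Adj p.2.2.2 p.1 ∧ p.1 ≠ p.2.2.1 ∧ p.2.1 ≠ p.2.2.2

/-- The number of 4-cycles of `G`; each 4-cycle yields 8 ordered tuples. -/
noncomputable def numC4 {V : Type} (G : SimpleGraph V) : ℕ :=
  {p : V × V × V × V | IsC4 G p}.ncard / 8

/-- The number of 4-cycles of `G` containing a vertex of `S`. -/
noncomputable def numC4Through {V : Type} (G : SimpleGraph V) (S : Set V) : ℕ :=
  {p : V × V × V × V | IsC4 G p ∧ (p.1 ∈ S ∨ p.2.1 ∈ S ∨ p.2.2.1 ∈ S ∨ p.2.2.2 ∈ S)}.ncard / 8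

/-- The invariant `ν(G) = 3e(G) − 17n(G) + 35α(G) + N(C₄;G)`. -/
noncomputable def nu {V : Type} (G : SimpleGraph V) : ℤ :=
  3 * (numEdges G : ℤ) - 17 * (Nat.card V : ℤ) + 35 * (indepNum' G : ℤ) + (numC4 G : ℤ)

/-- The closed neighbourhood `N[v]`. -/
def closedNbhd {V : Type} (G : SimpleGraph V) (v : V) : Set V := insert v (G.neighborSet v)

/-- `S` destabilises `G` : removing `S` decreases the independence number. -/
def Destab {V : Type} (G : SimpleGraph V) (S : Set V) : Prop :=
  indepNum' (G.induce Sᶜ) < indepNum' G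

/-- `G` is edge-critical (α-critical): removing any edge increases the independence number. -/
def EdgeCritical {V : Type} (G : SimpleGraph V) : Prop :=
  ∀ e ∈ G.edgeSet, indepNum' G < indepNum' (G.deleteEdges {e})

/-
If `e` is not redundant in `G_x`, a maximum independent set of `G_x − e` has `α(G_x) + 1`
vertices. No vertex of `G_x` is adjacent to `x`, so adding `x` gives an independent set of
`G − e` of size `α(G_x) + 2`, and `α(G − e) = α(G)` because `e` is redundant in `G`.
-/

section IndepNum

variable {V : Type} [Finite V]

lemma indepNum'_bddAbove (G : SimpleGraph V) :
    BddAbove {n : ℕ | ∃ s : Set V, s.Finite ∧ s.ncard = n ∧ ∀ a ∈ s, ∀ b ∈ s, ¬ G.Adj a b} := by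
  refine ⟨Nat.card V, ?_⟩
  rintro n ⟨s, -, rfl, -⟩
  simpa [Set.ncard_univ] using Set.ncard_le_ncard (Set.subset_univ s) Set.finite_univ

lemma ncard_le_indepNum' {G : SimpleGraph V} {s : Set V} (hs : ∀ a ∈ s, ∀ b ∈ s, ¬ G.Adj a b) :
    s.ncard ≤ indepNum' G :=
  le_csSup (indepNum'_bddAbove G) ⟨s, s.toFinite, rfl, hs⟩

lemma exists_ncard_eq_indepNum' (G : SimpleGraph V) :
    ∃ s : Set V, s.Finite ∧ s.ncard = indepNum' G ∧ ∀ a ∈ s, ∀ b ∈ s, ¬ G.Adj a b :=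
  Nat.sSup_mem (s := {n | ∃ s : Set V, s.Finite ∧ s.ncard = n ∧ ∀ a ∈ s, ∀ b ∈ s, ¬ G.Adj a b})
    ⟨0, ∅, Set.finite_empty, Set.ncard_empty V, by simp⟩ (indepNum'_bddAbove G)

lemma indepNum'_anti {G H : SimpleGraph V} (h : G ≤ H) : indepNum' H ≤ indepNum' G := by
  obtain ⟨s, -, hcard, hs⟩ := exists_ncard_eq_indepNum' H
  exact hcard ▸ ncard_le_indepNum' fun a ha b hb hab => hs a ha b hb (h hab)

lemma indepNum'_induce_add_one_le {G : SimpleGraph V} {S : Set V} {x : V} (hx : x ∉ S)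
    (hxS : ∀ a ∈ S, ¬ G.Adj x a) : indepNum' (G.induce S) + 1 ≤ indepNum' G := by
  obtain ⟨s, hsfin, hcard, hs⟩ := exists_ncard_eq_indepNum' (G.induce S)
  have hxs : x ∉ Subtype.val '' s := fun ⟨a, _, hax⟩ => hx (hax ▸ a.2)
  have hind : ∀ a ∈ insert x (Subtype.val '' s), ∀ b ∈ insert x (Subtype.val '' s),
      ¬ G.Adj a b := by
    rintro _ (rfl | ⟨a, ha, rfl⟩) _ (rfl | ⟨b, hb, rfl⟩) hab
    · exact G.irrefl hab
    · exact hxS b b.2 hab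
    · exact hxS a a.2 hab.symm
    · exact hs a ha b hb hab
  calc indepNum' (G.induce S) + 1 = (insert x (Subtype.val '' s)).ncard := by
        rw [Set.ncard_insert_of_notMem hxs (hsfin.image _),
          Set.ncard_image_of_injective _ Subtype.val_injective, hcard]
    _ ≤ indepNum' G := ncard_le_indepNum' hind

end IndepNum

lemma induce_deleteEdges_le {V : Type} (G : SimpleGraph V) (S : Set V) (u v : S) :
    (G.deleteEdges {s((u : V), v)}).induce S ≤ (G.induce S).deleteEdges {s(u, v)} := by
  intro a b h
  simp only [comap_adj, deleteEdges_adj, Set.mem_singleton_iff,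
    Function.Embedding.coe_subtype] at h ⊢
  refine ⟨h.1, fun he => h.2 ?_⟩
  simpa only [Sym2.map_mk] using congrArg (Sym2.map Subtype.val) he

theorem stmt8_general {V : Type} [Fintype V] (G : SimpleGraph V) (u v x : V)
    (hred : indepNum' (G.deleteEdges {s(u, v)}) = indepNum' G)
    (hu : u ∈ (closedNbhd G x)ᶜ) (hv : v ∈ (closedNbhd G x)ᶜ) :
    indepNum' ((G.induce (closedNbhd G x)ᶜ).deleteEdges
        {s((⟨u, hu⟩ : ↥(closedNbhd G x)ᶜ), (⟨v, hv⟩ : ↥(closedNbhd G x)ᶜ))}) =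
      indepNum' (G.induce (closedNbhd G x)ᶜ) ∨
    indepNum' (G.induce (closedNbhd G x)ᶜ) + 2 ≤ indepNum' G := by
  set S := (closedNbhd G x)ᶜ
  set Gx := G.induce S
  set e : Sym2 S := s(⟨u, hu⟩, ⟨v, hv⟩)
  refine or_iff_not_imp_left.2 fun hnred => ?_
  have hlt : indepNum' Gx < indepNum' (Gx.deleteEdges {e}) :=
    (indepNum'_anti (Gx.deleteEdges_le _)).lt_of_ne' hnred
  have hxS : x ∉ S := fun h => h (Set.mem_insert x _)
  have hnadj : ∀ a ∈ S, ¬ (G.deleteEdges {s(u, v)}).Adj x a :=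
    fun a ha hxa => ha (Set.mem_insert_of_mem x hxa.1)
  calc indepNum' Gx + 2 ≤ indepNum' (Gx.deleteEdges {e}) + 1 := by omega
    _ ≤ indepNum' ((G.deleteEdges {s(u, v)}).induce S) + 1 := by
        gcongr; exact indepNum'_anti (induce_deleteEdges_le G S ⟨u, hu⟩ ⟨v, hv⟩)
    _ ≤ indepNum' (G.deleteEdges {s(u, v)}) := indepNum'_induce_add_one_le hxS hnadj
    _ = indepNum' G := hred

/-- If `e = {u,v}` is a redundant edge of `G` and `x ∉ N[{u,v}]`, then either `e` is
redundant in `G_x`, or `α(G_x) ≤ α(G) − 2`. -/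
theorem stmt8 {V : Type} [Fintype V] (G : SimpleGraph V) (u v x : V) (hadj : G.Adj u v)
    (hred : indepNum' (G.deleteEdges {s(u, v)}) = indepNum' G)
    (hu : u ∈ (closedNbhd G x)ᶜ) (hv : v ∈ (closedNbhd G x)ᶜ) :
    indepNum' ((G.induce (closedNbhd G x)ᶜ).deleteEdges
        {s((⟨u, hu⟩ : ↥(closedNbhd G x)ᶜ), (⟨v, hv⟩ : ↥(closedNbhd G x)ᶜ))}) =
      indepNum' (G.induce (closedNbhd G x)ᶜ) ∨
    indepNum' (G.induce (closedNbhd G x)ᶜ) + 2 ≤ indepNum' G :=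
  stmt8_general G u v x hred hu hv
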